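/- arXiv:1401.0815 — 5 statements merged into one kernel-verified Lean document; each statement's English description precedes it below -/
import Mathlib

section
/- For every nonnegative integer n and every real x, (1/√(2π)) ∫_{-∞}^{∞} H_n(y) e^{-y²/2} e^{ixy} dy = iⁿ H_n(x) e^{-x²/2} (an identity of complex numbers, where the integral is a complex-valued integral over the real line). -/
/-!
Write `F_n(x)` for the integral. Integrating the derivative of `H_n(y) e^{-y²/2} e^{ixy}` over
the line shows that multiplying the integrand by `y` amounts to `ix` plus `d/dy`, and
`H_n' = 2n H_{n-1}`. Together with the three-term recurrence `H_{n+1} = 2y H_n - 2n H_{n-1}`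
this gives `F_{n+1} = 2ix F_n + 2n F_{n-1}`, which is also satisfied by
`√(2π) iⁿ H_n(x) e^{-x²/2}`; both sequences start from the Fourier transform of the Gaussian
at `n = 0`.
-/

open MeasureTheory Finset

/-- Physicists' Hermite polynomial
`H_n(x) = n! · Σ_{m=0}^{⌊n/2⌋} (-1)^m (2x)^{n-2m} / (m! (n-2m)!)`. -/
noncomputable def hermiteH (n : ℕ) (x : ℝ) : ℝ :=
  (n.factorial : ℝ) * ∑ m ∈ Finset.range (n / 2 + 1),
    (-1 : ℝ) ^ m * (2 * x) ^ (n - 2 * m) /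
      ((m.factorial : ℝ) * ((n - 2 * m).factorial : ℝ))

open Nat

lemma hermiteH_zero (x : ℝ) : hermiteH 0 x = 1 := by simp [hermiteH]

lemma hermiteH_one (x : ℝ) : hermiteH 1 x = 2 * x := by simp [hermiteH]

-- Extended by zero past `m = n / 2`, so that the sums for `H_n`, `H_{n+1}`, `H_{n+2}` can be
-- compared term by term over a common range.
noncomputable def hermiteTerm (n m : ℕ) (x : ℝ) : ℝ :=
  if 2 * m ≤ n then (-1) ^ m * (2 * x) ^ (n - 2 * m) / (m ! * (n - 2 * m)! : ℝ) else 0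

lemma hermiteH_eq_sum_hermiteTerm {n N : ℕ} (hN : n < 2 * N) (x : ℝ) :
    hermiteH n x = n ! * ∑ m ∈ range N, hermiteTerm n m x := by
  simp only [hermiteH, hermiteTerm]
  rw [← sum_filter]
  congr 2
  ext m
  simp only [mem_range, mem_filter]
  omega

lemma hermiteTerm_add_two_zero (n : ℕ) (x : ℝ) :
    (n + 2) * hermiteTerm (n + 2) 0 x = 2 * x * hermiteTerm (n + 1) 0 x := by
  simp only [hermiteTerm, zero_le, if_true, mul_zero, Nat.sub_zero, pow_zero, factorial_zero,
    cast_one, one_mul, pow_succ, factorial_succ (n + 1), cast_mul]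
  field_simp
  push_cast
  ring

lemma hermiteTerm_add_two_succ (n m : ℕ) (x : ℝ) :
    (n + 2) * hermiteTerm (n + 2) (m + 1) x
      = 2 * x * hermiteTerm (n + 1) (m + 1) x - 2 * hermiteTerm n m x := by
  rcases lt_or_ge n (2 * m) with hnm | hmn
  · simp [hermiteTerm, show ¬ 2 * m ≤ n by omega, show ¬ 2 * (m + 1) ≤ n + 1 by omega,
      show ¬ 2 * (m + 1) ≤ n + 2 by omega]
  obtain ⟨j, rfl⟩ := Nat.exists_eq_add_of_le hmn
  rcases j with _ | k
  · simp only [Nat.add_zero, hermiteTerm, show 2 * (m + 1) ≤ 2 * m + 2 by omega,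
      show ¬ 2 * (m + 1) ≤ 2 * m + 1 by omega, le_refl, if_true, if_false,
      show 2 * m + 2 - 2 * (m + 1) = 0 by omega, Nat.sub_self,
      pow_zero, factorial_zero, factorial_succ m, pow_succ, cast_mul, cast_one]
    field_simp
    push_cast
    ring
  · simp only [hermiteTerm, show 2 * (m + 1) ≤ 2 * m + (k + 1) + 2 by omega,
      show 2 * (m + 1) ≤ 2 * m + (k + 1) + 1 by omega, show 2 * m ≤ 2 * m + (k + 1) by omega,
      if_true, show 2 * m + (k + 1) + 2 - 2 * (m + 1) = k + 1 by omega,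
      show 2 * m + (k + 1) + 1 - 2 * (m + 1) = k by omega,
      show 2 * m + (k + 1) - 2 * m = k + 1 by omega,
      factorial_succ m, factorial_succ k, pow_succ, cast_mul]
    field_simp
    push_cast
    ring

lemma hermiteH_add_two (n : ℕ) (x : ℝ) :
    hermiteH (n + 2) x = 2 * x * hermiteH (n + 1) x - 2 * (n + 1) * hermiteH n x := by
  have hterms : ∑ m ∈ range (n + 1), (n + 2 : ℝ) * hermiteTerm (n + 2) (m + 1) x
      = ∑ m ∈ range (n + 1), (2 * x * hermiteTerm (n + 1) (m + 1) x - 2 * hermiteTerm n m x) :=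
    sum_congr rfl fun m _ => hermiteTerm_add_two_succ n m x
  rw [← mul_sum, sum_sub_distrib, ← mul_sum, ← mul_sum] at hterms
  rw [hermiteH_eq_sum_hermiteTerm (N := n + 2) (by omega),
    hermiteH_eq_sum_hermiteTerm (N := n + 2) (by omega),
    hermiteH_eq_sum_hermiteTerm (N := n + 1) (by omega), sum_range_succ' _ (n + 1),
    sum_range_succ' _ (n + 1), factorial_succ (n + 1), factorial_succ n]
  push_cast
  linear_combination ((n : ℝ) + 1) * n ! * (hterms + hermiteTerm_add_two_zero n x)

lemma hermiteH_succ (n : ℕ) (x : ℝ) :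
    hermiteH (n + 1) x = 2 * x * hermiteH n x - 2 * n * hermiteH (n - 1) x := by
  rcases n with _ | n
  · simp [hermiteH_one, hermiteH_zero]
  · simpa using hermiteH_add_two n x

lemma hasDerivAt_hermiteH (n : ℕ) (x : ℝ) :
    HasDerivAt (hermiteH n) (2 * n * hermiteH (n - 1) x) x := by
  induction n using Nat.twoStepInduction generalizing x with
  | zero => simpa [funext hermiteH_zero] using hasDerivAt_const x (1 : ℝ)
  | one => simpa [funext hermiteH_one, hermiteH_zero] using (hasDerivAt_id x).const_mul (2 : ℝ)
  | more n ih0 ih1 =>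
    have h := (((hasDerivAt_id x).const_mul (2 : ℝ)).mul (ih1 x)).sub
      ((ih0 x).const_mul (2 * ((n : ℝ) + 1)))
    rw [funext (hermiteH_add_two n)]
    refine h.congr_deriv ?_
    simp only [add_tsub_cancel_right, id]
    push_cast
    linear_combination -2 * ((n : ℝ) + 1) * hermiteH_succ n x

open Complex Polynomial

lemma exists_eval_eq_hermiteH (n : ℕ) : ∃ p : ℝ[X], ∀ y, p.eval y = hermiteH n y :=
  ⟨C (n ! : ℝ) * ∑ m ∈ range (n / 2 + 1),
      C ((-1) ^ m / (m ! * (n - 2 * m)! : ℝ)) * (C 2 * X) ^ (n - 2 * m),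
    fun y => by simp [hermiteH, eval_finsetSum, mul_div_right_comm]⟩

section GaussianCharacter

variable (x : ℝ)

lemma norm_gaussian_mul_cexp (y : ℝ) :
    ‖cexp (-(y : ℂ) ^ 2 / 2) * cexp (I * x * y)‖ = Real.exp (-y ^ 2 / 2) := by
  rw [norm_mul, norm_exp, norm_exp]
  simp [← ofReal_pow]

lemma integrable_pow_mul_gaussian_mul_cexp (k : ℕ) :
    Integrable fun y : ℝ => (y : ℂ) ^ k * cexp (-(y : ℂ) ^ 2 / 2) * cexp (I * x * y) := by
  refine (integrable_rpow_mul_exp_neg_mul_sq (b := 1 / 2) (by norm_num)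
    (s := k) (by linarith [k.cast_nonneg (α := ℝ)])).mono (by fun_prop) (.of_forall fun y => ?_)
  rw [mul_assoc, norm_mul, norm_gaussian_mul_cexp, norm_mul, Real.rpow_natCast, norm_pow,
    norm_real]
  ring_nf
  simp

lemma integrable_eval_mul_gaussian_mul_cexp (p : ℝ[X]) :
    Integrable fun y : ℝ => ((p.eval y : ℝ) : ℂ) * cexp (-(y : ℂ) ^ 2 / 2) * cexp (I * x * y) := by
  have hp (y : ℝ) :
      ((p.eval y : ℝ) : ℂ) = ∑ i ∈ range (p.natDegree + 1), (p.coeff i : ℂ) * (y : ℂ) ^ i := by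
    rw [eval_eq_sum_range]
    push_cast
    rfl
  simp_rw [hp, sum_mul]
  refine integrable_finsetSum _ fun i _ => ?_
  simpa [mul_assoc] using (integrable_pow_mul_gaussian_mul_cexp x i).const_mul (p.coeff i : ℂ)

lemma hasDerivAt_gaussian_mul_cexp (y : ℝ) :
    HasDerivAt (fun y : ℝ => cexp (-(y : ℂ) ^ 2 / 2) * cexp (I * x * y))
      ((I * x - y) * (cexp (-(y : ℂ) ^ 2 / 2) * cexp (I * x * y))) y := by
  have hsq : HasDerivAt (fun y : ℝ => -(y : ℂ) ^ 2 / 2) (-(y : ℂ)) y :=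
    (((hasDerivAt_id (y : ℂ)).pow 2).neg.div_const 2).comp_ofReal.congr_deriv (by simp; ring)
  have hlin : HasDerivAt (fun y : ℝ => I * x * y) (I * x) y := by
    simpa using ((hasDerivAt_id (y : ℂ)).const_mul (I * x)).comp_ofReal
  exact (hsq.cexp.mul hlin.cexp).congr_deriv (by ring)

lemma integral_ofReal_mul_mul_gaussian_mul_cexp {f f' : ℝ → ℂ}
    (hf : ∀ y, HasDerivAt f (f' y) y)
    (hfi : Integrable fun y : ℝ => f y * cexp (-(y : ℂ) ^ 2 / 2) * cexp (I * x * y))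
    (hf'i : Integrable fun y : ℝ => f' y * cexp (-(y : ℂ) ^ 2 / 2) * cexp (I * x * y))
    (hyfi : Integrable fun y : ℝ => y * f y * cexp (-(y : ℂ) ^ 2 / 2) * cexp (I * x * y)) :
    ∫ y : ℝ, y * f y * cexp (-(y : ℂ) ^ 2 / 2) * cexp (I * x * y)
      = I * x * (∫ y : ℝ, f y * cexp (-(y : ℂ) ^ 2 / 2) * cexp (I * x * y))
        + ∫ y : ℝ, f' y * cexp (-(y : ℂ) ^ 2 / 2) * cexp (I * x * y) := by
  have hderiv (y : ℝ) : HasDerivAt (fun y => f y * cexp (-(y : ℂ) ^ 2 / 2) * cexp (I * x * y))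
      (f' y * cexp (-(y : ℂ) ^ 2 / 2) * cexp (I * x * y)
        + I * x * (f y * cexp (-(y : ℂ) ^ 2 / 2) * cexp (I * x * y))
        - y * f y * cexp (-(y : ℂ) ^ 2 / 2) * cexp (I * x * y)) y := by
    simp_rw [mul_assoc (f _)]
    exact ((hf y).mul (hasDerivAt_gaussian_mul_cexp x y)).congr_deriv (by ring)
  have hsum : Integrable fun y : ℝ => f' y * cexp (-(y : ℂ) ^ 2 / 2) * cexp (I * x * y)
      + I * x * (f y * cexp (-(y : ℂ) ^ 2 / 2) * cexp (I * x * y)) :=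
    hf'i.add (hfi.const_mul _)
  have hzero := integral_eq_zero_of_hasDerivAt_of_integrable hderiv (hsum.sub hyfi) hfi
  rw [integral_sub hsum hyfi, integral_add hf'i (hfi.const_mul _), integral_const_mul] at hzero
  linear_combination -hzero

end GaussianCharacter

lemma integrable_pow_mul_hermiteH_mul_gaussian_mul_cexp (k n : ℕ) (x : ℝ) :
    Integrable fun y : ℝ =>
      (y : ℂ) ^ k * hermiteH n y * cexp (-(y : ℂ) ^ 2 / 2) * cexp (I * x * y) := by
  obtain ⟨p, hp⟩ := exists_eval_eq_hermiteH n
  refine (integrable_eval_mul_gaussian_mul_cexp x (X ^ k * p)).congr (.of_forall fun y => ?_)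
  simp only [eval_mul, eval_pow, eval_X, hp, ofReal_mul, ofReal_pow]

noncomputable def hermiteFourier (n : ℕ) (x : ℝ) : ℂ :=
  ∫ y : ℝ, (hermiteH n y : ℂ) * cexp (-(y : ℂ) ^ 2 / 2) * cexp (I * x * y)

lemma hermiteFourier_zero (x : ℝ) :
    hermiteFourier 0 x = Real.sqrt (2 * Real.pi) * cexp (-(x : ℂ) ^ 2 / 2) := by
  have hintegrand (y : ℝ) :
      cexp (-(y : ℂ) ^ 2 / 2) * cexp (I * x * y) = cexp (I * x * y) * cexp (-(1 / 2) * y ^ 2) := by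
    rw [mul_comm]
    ring_nf
  have hsqrt : ((Real.pi : ℂ) / (1 / 2)) ^ (1 / 2 : ℂ) = Real.sqrt (2 * Real.pi) := by
    rw [Real.sqrt_eq_rpow, ofReal_cpow (by positivity)]
    push_cast
    ring_nf
  simp only [hermiteFourier, hermiteH_zero, ofReal_one, one_mul, hintegrand,
    fourierIntegral_gaussian (show 0 < (1 / 2 : ℂ).re by norm_num), hsqrt]
  ring_nf

lemma integral_ofReal_mul_hermiteH_mul_gaussian_mul_cexp (n : ℕ) (x : ℝ) :
    ∫ y : ℝ, y * hermiteH n y * cexp (-(y : ℂ) ^ 2 / 2) * cexp (I * x * y)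
      = I * x * hermiteFourier n x + 2 * n * hermiteFourier (n - 1) x := by
  have hH (m : ℕ) := integrable_pow_mul_hermiteH_mul_gaussian_mul_cexp 0 m x
  simp only [pow_zero, one_mul] at hH
  rw [integral_ofReal_mul_mul_gaussian_mul_cexp x
    (f' := fun y => ((2 * n : ℂ) * hermiteH (n - 1) y))
    (fun y => by simpa using (hasDerivAt_hermiteH n y).ofReal_comp) (hH n)
    (by simpa [mul_assoc] using (hH (n - 1)).const_mul (2 * n : ℂ))
    (by simpa using integrable_pow_mul_hermiteH_mul_gaussian_mul_cexp 1 n x)]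
  simp_rw [mul_assoc (2 * (n : ℂ))]
  rw [integral_const_mul]
  rfl

lemma hermiteFourier_succ (n : ℕ) (x : ℝ) :
    hermiteFourier (n + 1) x
      = 2 * I * x * hermiteFourier n x + 2 * n * hermiteFourier (n - 1) x := by
  have hH := integrable_pow_mul_hermiteH_mul_gaussian_mul_cexp 0 (n - 1) x
  have hyH := integrable_pow_mul_hermiteH_mul_gaussian_mul_cexp 1 n x
  simp only [pow_zero, one_mul, pow_one] at hH hyH
  calc hermiteFourier (n + 1) x
      = ∫ y : ℝ, (2 * (y * hermiteH n y * cexp (-(y : ℂ) ^ 2 / 2) * cexp (I * x * y))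
          - 2 * n * (hermiteH (n - 1) y * cexp (-(y : ℂ) ^ 2 / 2) * cexp (I * x * y))) := by
        unfold hermiteFourier
        congr 1 with y
        rw [hermiteH_succ]
        push_cast
        ring
    _ = 2 * (I * x * hermiteFourier n x + 2 * n * hermiteFourier (n - 1) x)
          - 2 * n * hermiteFourier (n - 1) x := by
        rw [integral_sub (hyH.const_mul _) (hH.const_mul _), integral_const_mul,
          integral_const_mul, integral_ofReal_mul_hermiteH_mul_gaussian_mul_cexp]
        rfl
    _ = _ := by ring

lemma hermiteFourier_eq (n : ℕ) (x : ℝ) :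
    hermiteFourier n x
      = Real.sqrt (2 * Real.pi) * (I ^ n * hermiteH n x * cexp (-(x : ℂ) ^ 2 / 2)) := by
  induction n using Nat.twoStepInduction with
  | zero => simp [hermiteFourier_zero, hermiteH_zero]
  | one =>
    rw [hermiteFourier_succ, hermiteFourier_zero, hermiteH_one]
    push_cast
    ring
  | more n ih0 ih1 =>
    rw [hermiteFourier_succ, add_tsub_cancel_right, ih0, ih1, hermiteH_add_two]
    push_cast
    linear_combination 2 * ((n : ℂ) + 1) * Real.sqrt (2 * Real.pi) * I ^ n * hermiteH n x
      * cexp (-(x : ℂ) ^ 2 / 2) * I_sq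

theorem hermite_fourier_selfdual (n : ℕ) (x : ℝ) :
    (1 / Real.sqrt (2 * Real.pi) : ℂ) *
      ∫ y : ℝ, (hermiteH n y : ℂ) * Complex.exp (-(y : ℂ) ^ 2 / 2) *
        Complex.exp (Complex.I * (x : ℂ) * (y : ℂ)) =
    Complex.I ^ n * (hermiteH n x : ℂ) * Complex.exp (-(x : ℂ) ^ 2 / 2) := by
  have hsqrt : (Real.sqrt (2 * Real.pi) : ℂ) ≠ 0 := by
    exact_mod_cast (Real.sqrt_pos.2 Real.two_pi_pos).ne'
  rw [← hermiteFourier, hermiteFourier_eq]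
  field_simp
end

section
/- For every nonnegative integer n, every real α > -1, and every real x, (1/Γ(α+1)) ∫_0^∞ (L_n^{(α)}(y)/L_n^{(α)}(0)) e^{-y} y^α e^{-ixy} dy = iⁿ xⁿ / (1+ix)^{n+α+1}, where L_n^{(α)}(0) = (α+1)_n/n! and (1+ix)^{n+α+1} is the principal power. -/
open MeasureTheory Finset

/-- Rising factorial (Pochhammer symbol) `(a)_k = a(a+1)⋯(a+k-1)`. -/
noncomputable def poch (a : ℝ) (k : ℕ) : ℝ := ∏ i ∈ Finset.range k, (a + i)

/-- Generalized Laguerre polynomial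
`L_n^{(α)}(x) = Σ_{k=0}^n (-1)^k ((α+k+1)_{n-k} / ((n-k)! k!)) x^k`. -/
noncomputable def laguerreL (n : ℕ) (α : ℝ) (x : ℝ) : ℝ :=
  ∑ k ∈ Finset.range (n + 1),
    (-1 : ℝ) ^ k * poch (α + k + 1) (n - k) /
      (((n - k).factorial : ℝ) * (k.factorial : ℝ)) * x ^ k

/-!
Since `L_n^{(α)}(y) / L_n^{(α)}(0) = ∑ₖ (-1)ᵏ C(n,k) yᵏ / (α+1)ₖ`, the integral is a
combination of the moments `∫₀^∞ y^{α+k} e^{-cy} dy = Γ(α+k+1) / c^{α+k+1}` with `c = 1 + ix`,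
and the binomial theorem sums them to `Γ(α+1) (1 - c⁻¹)ⁿ / c^{α+1}`. The moment formula for
complex `c` with `0 < re c` holds because `c^{β+1} ∫₀^∞ t^β e^{-ct} dt` has derivative zero in
`c` (differentiate under the integral sign, then integrate by parts in `t`), so it is constant
on the right half-plane and equals `Γ(β+1)` at `c = 1`.
-/

open Complex Set Filter Topology

lemma poch_add (a : ℝ) (m k : ℕ) : poch a (m + k) = poch a m * poch (a + m) k := by
  simp only [poch, prod_range_add, Nat.cast_add, add_assoc]

lemma poch_pos {a : ℝ} (ha : 0 < a) (k : ℕ) : 0 < poch a k :=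
  prod_pos fun i _ => by positivity

lemma Real.Gamma_add_nat_eq_mul_poch {a : ℝ} (ha : 0 < a) (m : ℕ) :
    Real.Gamma (a + m) = Real.Gamma a * poch a m := by
  induction m with
  | zero => simp [poch]
  | succ m ih =>
    rw [Nat.cast_succ, ← add_assoc, Real.Gamma_add_one (by positivity), ih, poch, poch,
      prod_range_succ]
    ring

lemma laguerreL_div_poch_eq_sum {n : ℕ} {α : ℝ} (hα : poch (α + 1) n ≠ 0) (y : ℝ) :
    laguerreL n α y / (poch (α + 1) n / n.factorial) =
      ∑ k ∈ range (n + 1), (-1) ^ k * n.choose k / poch (α + 1) k * y ^ k := by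
  rw [laguerreL, sum_div]
  refine sum_congr rfl fun k hk => ?_
  obtain ⟨m, rfl⟩ := Nat.exists_eq_add_of_le (Nat.lt_succ_iff.mp (mem_range.mp hk))
  rw [poch_add] at hα
  have hfac : ((k + m).choose k : ℝ) * k.factorial * m.factorial = (k + m).factorial := by
    have := Nat.choose_mul_factorial_mul_factorial (Nat.le_add_right k m)
    rw [Nat.add_sub_cancel_left] at this
    exact_mod_cast this
  rw [Nat.add_sub_cancel_left, poch_add, ← hfac, add_right_comm α]
  have := left_ne_zero_of_mul hα
  have := right_ne_zero_of_mul hα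
  field_simp

lemma norm_cexp_neg_mul_ofReal (c : ℂ) (t : ℝ) : ‖cexp (-(c * t))‖ = Real.exp (-(c.re * t)) := by
  simp [Complex.norm_exp]

lemma integrableOn_rpow_mul_cexp_neg_mul {β : ℝ} (hβ : -1 < β) {c : ℂ} (hc : 0 < c.re) :
    IntegrableOn (fun t : ℝ => ((t ^ β : ℝ) : ℂ) * cexp (-(c * t))) (Ioi 0) := by
  refine Integrable.mono' (integrableOn_rpow_mul_exp_neg_mul_rpow hβ one_pos hc)
    (by fun_prop) ?_
  filter_upwards [ae_restrict_mem measurableSet_Ioi] with t ht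
  rw [norm_mul, norm_cexp_neg_mul_ofReal, Complex.norm_real, Real.norm_of_nonneg
    (Real.rpow_nonneg ht.le β), Real.rpow_one, neg_mul]

lemma mul_integral_rpow_add_one_mul_cexp_neg_mul {β : ℝ} (hβ : -1 < β) {c : ℂ} (hc : 0 < c.re) :
    c * ∫ t in Ioi (0 : ℝ), ((t ^ (β + 1) : ℝ) : ℂ) * cexp (-(c * t)) =
      (β + 1) * ∫ t in Ioi (0 : ℝ), ((t ^ β : ℝ) : ℂ) * cexp (-(c * t)) := by
  have hβ1 : -1 < β + 1 := by linarith
  have hderiv : ∀ t ∈ Ioi (0 : ℝ),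
      HasDerivAt (fun s : ℝ => ((s ^ (β + 1) : ℝ) : ℂ) * cexp (-(c * s)))
      ((β + 1) * (((t ^ β : ℝ) : ℂ) * cexp (-(c * t))) -
        c * (((t ^ (β + 1) : ℝ) : ℂ) * cexp (-(c * t)))) t := by
    intro t ht
    have hpow := (Real.hasDerivAt_rpow_const (p := β + 1) (Or.inl ht.ne')).ofReal_comp
    have hexp := ((((hasDerivAt_id (t : ℂ)).const_mul c).neg).cexp).comp_ofReal
    refine (hpow.mul hexp).congr_deriv ?_
    rw [add_sub_cancel_right]
    simp only [Pi.neg_apply, id, mul_one]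
    push_cast
    ring
  have hcont : ContinuousWithinAt (fun s : ℝ => ((s ^ (β + 1) : ℝ) : ℂ) * cexp (-(c * s)))
      (Ici 0) 0 :=
    ((continuous_ofReal.continuousAt.comp
      (Real.continuousAt_rpow_const 0 (β + 1) (Or.inr (by linarith)))).mul
      (by fun_prop)).continuousWithinAt
  have htop : Tendsto (fun s : ℝ => ((s ^ (β + 1) : ℝ) : ℂ) * cexp (-(c * s))) atTop (𝓝 0) := by
    rw [tendsto_zero_iff_norm_tendsto_zero]
    refine (tendsto_rpow_mul_exp_neg_mul_atTop_nhds_zero (β + 1) c.re hc).congr' ?_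
    filter_upwards [eventually_gt_atTop 0] with t ht
    rw [norm_mul, norm_cexp_neg_mul_ofReal, Complex.norm_real, Real.norm_of_nonneg
      (Real.rpow_nonneg ht.le _), neg_mul]
  have hint := integral_Ioi_of_hasDerivAt_of_tendsto hcont hderiv
    (((integrableOn_rpow_mul_cexp_neg_mul hβ hc).const_mul _).sub
      ((integrableOn_rpow_mul_cexp_neg_mul hβ1 hc).const_mul _)) htop
  rw [integral_sub ((integrableOn_rpow_mul_cexp_neg_mul hβ hc).const_mul _)
    ((integrableOn_rpow_mul_cexp_neg_mul hβ1 hc).const_mul _), integral_const_mul,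
    integral_const_mul] at hint
  simp [Real.zero_rpow (by linarith : β + 1 ≠ 0)] at hint
  linear_combination -hint

lemma hasDerivAt_integral_rpow_mul_cexp_neg_mul {β : ℝ} (hβ : -1 < β) {c : ℂ} (hc : 0 < c.re) :
    HasDerivAt (fun z : ℂ => ∫ t in Ioi (0 : ℝ), ((t ^ β : ℝ) : ℂ) * cexp (-(z * t)))
      (-∫ t in Ioi (0 : ℝ), ((t ^ (β + 1) : ℝ) : ℂ) * cexp (-(c * t))) c := by
  have hc2 : 0 < c.re / 2 := half_pos hc
  have hre : ∀ z ∈ Metric.ball c (c.re / 2), c.re / 2 < z.re := by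
    intro z hz
    have := (abs_re_le_norm (z - c)).trans_lt (mem_ball_iff_norm.mp hz)
    rw [sub_re, abs_lt] at this
    linarith
  have hF' : ∀ t : ℝ, ∀ z : ℂ, HasDerivAt (fun w : ℂ => ((t ^ β : ℝ) : ℂ) * cexp (-(w * t)))
      (-(((t ^ β : ℝ) : ℂ) * t * cexp (-(z * t)))) z := by
    intro t z
    refine ((((hasDerivAt_id z).mul_const (t : ℂ)).neg.cexp).const_mul _).congr_deriv ?_
    simp only [Pi.neg_apply, id]
    ring
  have hderiv := hasDerivAt_integral_of_dominated_loc_of_deriv_le (μ := volume.restrict (Ioi 0))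
    (F := fun z t => ((t ^ β : ℝ) : ℂ) * cexp (-(z * t)))
    (bound := fun t : ℝ => t ^ (β + 1) * Real.exp (-(c.re / 2) * t ^ (1 : ℝ)))
    (Metric.ball_mem_nhds c hc2) (Eventually.of_forall fun z => by fun_prop)
    (integrableOn_rpow_mul_cexp_neg_mul hβ hc) (by fun_prop) ?_
    (integrableOn_rpow_mul_exp_neg_mul_rpow (by linarith) one_pos hc2)
    (Eventually.of_forall fun t z _ => hF' t z)
  · refine hderiv.2.congr_deriv ?_
    rw [← integral_neg]
    refine setIntegral_congr_fun measurableSet_Ioi fun t ht => ?_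
    simp only [Real.rpow_add_one ht.ne', ofReal_mul]
  · filter_upwards [ae_restrict_mem measurableSet_Ioi] with t ht z hz
    rw [norm_neg, norm_mul, norm_mul, norm_cexp_neg_mul_ofReal, Complex.norm_real,
      Complex.norm_real, Real.norm_of_nonneg (Real.rpow_nonneg ht.le β),
      Real.norm_of_nonneg ht.le, Real.rpow_one, Real.rpow_add_one ht.ne']
    refine mul_le_mul_of_nonneg_left (Real.exp_le_exp.mpr ?_)
      (mul_nonneg (Real.rpow_nonneg ht.le β) ht.le)
    nlinarith [hre z hz, mem_Ioi.mp ht]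

lemma integral_rpow_mul_cexp_neg_mul_Ioi {β : ℝ} (hβ : -1 < β) {c : ℂ} (hc : 0 < c.re) :
    ∫ t in Ioi (0 : ℝ), ((t ^ β : ℝ) : ℂ) * cexp (-(c * t)) =
      Real.Gamma (β + 1) / c ^ ((β : ℂ) + 1) := by
  set F : ℂ → ℂ := fun z => ∫ t in Ioi (0 : ℝ), ((t ^ β : ℝ) : ℂ) * cexp (-(z * t))
  set G : ℂ → ℂ := fun z => z ^ ((β : ℂ) + 1) * F z
  have hG : ∀ z : ℂ, 0 < z.re → HasDerivAt G 0 z := by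
    intro z hz
    refine (((hasDerivAt_id z).cpow_const (Or.inl hz)).mul
      (hasDerivAt_integral_rpow_mul_cexp_neg_mul hβ hz)).congr_deriv ?_
    have hz0 : z ≠ 0 := fun h => by simp [h] at hz
    have hibp := mul_integral_rpow_add_one_mul_cexp_neg_mul hβ hz
    rw [add_sub_cancel_right, id, mul_one, cpow_add _ _ hz0, cpow_one]
    linear_combination (-z ^ (β : ℂ)) * hibp
  have hopen : IsOpen {z : ℂ | 0 < z.re} := isOpen_lt continuous_const continuous_re
  have hconst : G c = G 1 :=
    hopen.is_const_of_deriv_eq_zero (convex_halfSpace_re_gt 0).isPreconnected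
      (fun z hz => (hG z hz).differentiableAt.differentiableWithinAt)
      (fun z hz => (hG z hz).deriv) hc (by simp)
  have hG1 : G 1 = Real.Gamma (β + 1) := by
    simp only [G, F, one_cpow, one_mul, Real.Gamma_eq_integral (by linarith : 0 < β + 1),
      add_sub_cancel_right]
    rw [← integral_complex_ofReal]
    refine setIntegral_congr_fun measurableSet_Ioi fun t _ => ?_
    push_cast
    ring_nf
  have hc0 : c ^ ((β : ℂ) + 1) ≠ 0 := by
    rw [Ne, cpow_eq_zero_iff]
    exact fun h => by simp [h.1] at hc
  rw [eq_div_iff hc0, mul_comm, ← hG1, ← hconst]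

lemma ofReal_pow_mul_ofReal_rpow {t : ℝ} (ht : 0 < t) (k : ℕ) (α : ℝ) :
    (t : ℂ) ^ k * ((t ^ α : ℝ) : ℂ) = ((t ^ (α + k) : ℝ) : ℂ) := by
  rw [Real.rpow_add ht, Real.rpow_natCast]
  push_cast
  ring

lemma integrableOn_pow_mul_rpow_mul_cexp_neg_mul {α : ℝ} (hα : -1 < α) {c : ℂ} (hc : 0 < c.re)
    (k : ℕ) :
    IntegrableOn (fun t : ℝ => (t : ℂ) ^ k * ((t ^ α : ℝ) : ℂ) * cexp (-(c * t))) (Ioi 0) :=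
  (integrableOn_rpow_mul_cexp_neg_mul (β := α + k) (by linarith [k.cast_nonneg (α := ℝ)])
    hc).congr_fun (fun t ht => by dsimp only; rw [← ofReal_pow_mul_ofReal_rpow ht])
    measurableSet_Ioi

lemma integral_pow_mul_rpow_mul_cexp_neg_mul {α : ℝ} (hα : -1 < α) {c : ℂ} (hc : 0 < c.re)
    (k : ℕ) :
    ∫ t in Ioi (0 : ℝ), (t : ℂ) ^ k * ((t ^ α : ℝ) : ℂ) * cexp (-(c * t)) =
      Real.Gamma (α + 1) * poch (α + 1) k / (c ^ ((α : ℂ) + 1) * c ^ k) := by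
  have hc0 : c ≠ 0 := fun h => by simp [h] at hc
  rw [setIntegral_congr_fun measurableSet_Ioi
      (fun t ht => by rw [ofReal_pow_mul_ofReal_rpow ht]),
    integral_rpow_mul_cexp_neg_mul_Ioi (by linarith [k.cast_nonneg (α := ℝ)]) hc,
    add_right_comm, Real.Gamma_add_nat_eq_mul_poch (by linarith), ← cpow_natCast,
    ← cpow_add _ _ hc0]
  push_cast
  ring_nf

lemma sum_neg_one_pow_mul_choose_div_pow {K : Type*} [Field K] (z : K) (n : ℕ) :
    ∑ k ∈ range (n + 1), (-1) ^ k * n.choose k / z ^ k = (1 - z⁻¹) ^ n := by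
  rw [sub_eq_neg_add, add_pow]
  refine sum_congr rfl fun k _ => ?_
  rw [one_pow, mul_one, neg_pow z⁻¹, inv_pow]
  ring

lemma integral_laguerreL_div_poch_mul_rpow_mul_cexp_neg_mul {n : ℕ} {α : ℝ} (hα : -1 < α)
    {c : ℂ} (hc : 0 < c.re) :
    ∫ y in Ioi (0 : ℝ), ((laguerreL n α y / (poch (α + 1) n / n.factorial) : ℝ) : ℂ) *
        ((y ^ α : ℝ) : ℂ) * cexp (-(c * y)) =
      Real.Gamma (α + 1) * (1 - c⁻¹) ^ n / c ^ ((α : ℂ) + 1) := by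
  have hpoch : ∀ k, 0 < poch (α + 1) k := poch_pos (by linarith)
  have hexpand : ∀ y : ℝ,
      ((laguerreL n α y / (poch (α + 1) n / n.factorial) : ℝ) : ℂ) *
        ((y ^ α : ℝ) : ℂ) * cexp (-(c * y)) =
      ∑ k ∈ range (n + 1), (((-1) ^ k * n.choose k / poch (α + 1) k : ℝ) : ℂ) *
        ((y : ℂ) ^ k * ((y ^ α : ℝ) : ℂ) * cexp (-(c * y))) := fun y => by
    rw [laguerreL_div_poch_eq_sum (hpoch n).ne', ofReal_sum, sum_mul, sum_mul]
    refine sum_congr rfl fun k _ => ?_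
    push_cast
    ring
  simp only [hexpand]
  rw [integral_finsetSum _ fun k _ =>
    (integrableOn_pow_mul_rpow_mul_cexp_neg_mul hα hc k).const_mul _]
  simp only [integral_const_mul, integral_pow_mul_rpow_mul_cexp_neg_mul hα hc]
  have hterm : ∀ k ∈ range (n + 1),
      (((-1) ^ k * n.choose k / poch (α + 1) k : ℝ) : ℂ) *
        (Real.Gamma (α + 1) * poch (α + 1) k / (c ^ ((α : ℂ) + 1) * c ^ k)) =
      Real.Gamma (α + 1) / c ^ ((α : ℂ) + 1) * ((-1) ^ k * n.choose k / c ^ k) := by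
    intro k _
    have hpochC : ((poch (α + 1) k : ℝ) : ℂ) ≠ 0 := ofReal_ne_zero.mpr (hpoch k).ne'
    push_cast
    field_simp
  rw [sum_congr rfl hterm, ← mul_sum, sum_neg_one_pow_mul_choose_div_pow]
  ring

theorem laguerre_fourier (n : ℕ) (α : ℝ) (hα : α > -1) (x : ℝ) :
    (1 / (Real.Gamma (α + 1)) : ℂ) *
      ∫ y in Set.Ioi (0 : ℝ),
        ((laguerreL n α y / (poch (α + 1) n / (n.factorial : ℝ)) : ℝ) : ℂ) *
          Complex.exp (-(y : ℂ)) * ((y ^ α : ℝ) : ℂ) *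
          Complex.exp (-(Complex.I * (x : ℂ) * (y : ℂ))) =
    Complex.I ^ n * (x : ℂ) ^ n /
      (1 + Complex.I * (x : ℂ)) ^ ((n : ℂ) + (α : ℂ) + 1) := by
  set c : ℂ := 1 + I * x with hc_def
  have hc : 0 < c.re := by simp [c]
  have hc0 : c ≠ 0 := fun h => by simp [h] at hc
  have hΓ : (Real.Gamma (α + 1) : ℂ) ≠ 0 :=
    ofReal_ne_zero.mpr (Real.Gamma_pos_of_pos (by linarith)).ne'
  have hintegrand : ∀ y : ℝ,
      ((laguerreL n α y / (poch (α + 1) n / n.factorial) : ℝ) : ℂ) * cexp (-(y : ℂ)) *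
          ((y ^ α : ℝ) : ℂ) * cexp (-(I * x * y)) =
        ((laguerreL n α y / (poch (α + 1) n / n.factorial) : ℝ) : ℂ) *
          ((y ^ α : ℝ) : ℂ) * cexp (-(c * y)) := fun y => by
    rw [mul_right_comm _ (cexp _), mul_assoc _ (cexp _), ← Complex.exp_add, hc_def]
    ring_nf
  have hshift : 1 - c⁻¹ = I * x / c := by
    field_simp
    ring
  simp only [hintegrand]
  rw [integral_laguerreL_div_poch_mul_rpow_mul_cexp_neg_mul hα hc, hshift, div_pow,
    show (n : ℂ) + α + 1 = (α + 1 : ℂ) + (n : ℕ) by ring, cpow_add ((α : ℂ) + 1) _ hc0,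
    cpow_natCast]
  field_simp
  ring
end

section
/- For every nonnegative integer n, every real α, and every real x, x · (d/dx)L_n^{(α)}(x) + α · L_n^{(α)}(x) = (n+α) · L_n^{(α-1)}(x). -/
/-!
Comparing coefficients: `x d/dx` multiplies the coefficient `c_k` of `x^k` by `k`, so the claim is
`(k + α) c_k^{(α)} = (n + α) c_k^{(α-1)}`, which is the shift identity
`a (a+1)_m = (a)_m (a+m)` for `a = α + k`, `m = n - k`.
-/

open MeasureTheory Finset

lemma mul_poch_add_one (a : ℝ) (m : ℕ) : a * poch (a + 1) m = poch a m * (a + m) := by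
  induction m with
  | zero => simp [poch]
  | succ m ih =>
    simp only [poch, prod_range_succ] at ih ⊢
    push_cast
    linear_combination (a + 1 + m) * ih

noncomputable def laguerreCoeff (n : ℕ) (α : ℝ) (k : ℕ) : ℝ :=
  (-1 : ℝ) ^ k * poch (α + k + 1) (n - k) / (((n - k).factorial : ℝ) * (k.factorial : ℝ))

lemma laguerreL_eq_sum (n : ℕ) (α x : ℝ) :
    laguerreL n α x = ∑ k ∈ range (n + 1), laguerreCoeff n α k * x ^ k :=
  rfl

lemma hasDerivAt_laguerreL (n : ℕ) (α x : ℝ) :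
    HasDerivAt (laguerreL n α)
      (∑ k ∈ range (n + 1), laguerreCoeff n α k * (k * x ^ (k - 1))) x := by
  simp only [funext (laguerreL_eq_sum n α)]
  exact HasDerivAt.fun_sum fun k _ => (hasDerivAt_pow k x).const_mul _

lemma mul_deriv_laguerreL (n : ℕ) (α x : ℝ) :
    x * deriv (laguerreL n α) x = ∑ k ∈ range (n + 1), k * laguerreCoeff n α k * x ^ k := by
  rw [(hasDerivAt_laguerreL n α x).deriv, mul_sum]
  refine sum_congr rfl fun k _ => ?_
  rcases eq_or_ne k 0 with rfl | hk
  · simp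
  · rw [← mul_pow_sub_one hk x]
    ring

lemma add_mul_laguerreCoeff {n k : ℕ} (hk : k ≤ n) (α : ℝ) :
    (k + α) * laguerreCoeff n α k = (n + α) * laguerreCoeff n (α - 1) k := by
  have hpoch := mul_poch_add_one (α + k) (n - k)
  rw [Nat.cast_sub hk] at hpoch
  have hshift : α - 1 + k + 1 = α + k := by ring
  rw [laguerreCoeff, laguerreCoeff, hshift]
  linear_combination
    (-1 : ℝ) ^ k / (((n - k).factorial : ℝ) * (k.factorial : ℝ)) * hpoch

theorem laguerre_diff_lower (n : ℕ) (α : ℝ) (x : ℝ) :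
    x * deriv (fun t => laguerreL n α t) x + α * laguerreL n α x =
      ((n : ℝ) + α) * laguerreL n (α - 1) x := by
  rw [mul_deriv_laguerreL, laguerreL_eq_sum, laguerreL_eq_sum, mul_sum, mul_sum,
    ← sum_add_distrib]
  refine sum_congr rfl fun k hk => ?_
  have hkn : k ≤ n := Nat.lt_succ_iff.mp (mem_range.mp hk)
  linear_combination x ^ k * add_mul_laguerreCoeff hkn α
end

section
/- For every nonnegative integer n, every real λ > 0, and every real x, (2/(n! Γ(λ))) ∫_0^∞ H_n(tx) t^{n+2λ-1} e^{-t²} dt = C_n^{(λ)}(x), where Γ is the Gamma function. -/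
/-!
Expanding `H_n(tx)` in powers of `t` turns the integral into a finite sum of half-line Gaussian
moments `∫₀^∞ t^q e^{-t²} dt = Γ((q+1)/2)/2`. The term `t^{n-2m}` contributes
`Γ(λ + n - m) = (λ)_{n-m} Γ(λ)`, so after dividing by `n! Γ(λ)/2` it becomes the `m`-th term of
`C_n^{(λ)}(x)`.
-/

open MeasureTheory Finset

/-- Gegenbauer (ultraspherical) polynomial
`C_n^{(λ)}(x) = Σ_{ℓ=0}^{⌊n/2⌋} (-1)^ℓ ((λ)_{n-ℓ}/(ℓ! (n-2ℓ)!)) (2x)^{n-2ℓ}`. -/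
noncomputable def gegenbauerC (n : ℕ) (l : ℝ) (x : ℝ) : ℝ :=
  ∑ m ∈ Finset.range (n / 2 + 1),
    (-1 : ℝ) ^ m * poch l (n - m) /
      ((m.factorial : ℝ) * ((n - 2 * m).factorial : ℝ)) * (2 * x) ^ (n - 2 * m)

open Real Set

lemma Gamma_add_nat_eq_poch_mul_Gamma {a : ℝ} (ha : ∀ k : ℕ, a + k ≠ 0) (k : ℕ) :
    Gamma (a + k) = poch a k * Gamma a := by
  induction k with
  | zero => simp [poch]
  | succ k ih =>
    rw [Nat.cast_succ, ← add_assoc, Gamma_add_one (ha k), ih, poch, poch, prod_range_succ]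
    ring

lemma integrableOn_rpow_mul_exp_neg_sq {q : ℝ} (hq : -1 < q) :
    IntegrableOn (fun t : ℝ => t ^ q * exp (-t ^ 2)) (Ioi 0) := by
  simpa only [← rpow_two] using integrableOn_rpow_mul_exp_neg_rpow hq two_pos

lemma integral_rpow_mul_exp_neg_sq {q : ℝ} (hq : -1 < q) :
    ∫ t in Ioi (0 : ℝ), t ^ q * exp (-t ^ 2) = Gamma ((q + 1) / 2) / 2 := by
  simp only [← rpow_two, integral_rpow_mul_exp_neg_rpow two_pos hq]
  ring

noncomputable def hermiteCoeff (n : ℕ) (x : ℝ) (m : ℕ) : ℝ :=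
  n.factorial * (-1) ^ m * (2 * x) ^ (n - 2 * m) / (m.factorial * (n - 2 * m).factorial)

lemma hermiteH_mul_mul_rpow (n : ℕ) (x s : ℝ) {t : ℝ} (ht : 0 < t) :
    hermiteH n (t * x) * t ^ s =
      ∑ m ∈ range (n / 2 + 1), hermiteCoeff n x m * t ^ ((n - 2 * m : ℕ) + s) := by
  simp only [hermiteH, hermiteCoeff, mul_sum, sum_mul, rpow_add ht, rpow_natCast]
  refine sum_congr rfl fun m _ => ?_
  rw [mul_pow, mul_pow]
  ring

lemma integral_hermiteH_mul_rpow_mul_exp_neg_sq (n : ℕ) (x : ℝ) {s : ℝ} (hs : -1 < s) :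
    ∫ t in Ioi (0 : ℝ), hermiteH n (t * x) * t ^ s * exp (-t ^ 2) =
      ∑ m ∈ range (n / 2 + 1),
        hermiteCoeff n x m * (Gamma (((n - 2 * m : ℕ) + s + 1) / 2) / 2) := by
  have hq (m : ℕ) : -1 < ((n - 2 * m : ℕ) : ℝ) + s := by
    linarith [(Nat.cast_nonneg (n - 2 * m) : (0 : ℝ) ≤ _)]
  have hexpand : ∀ t ∈ Ioi (0 : ℝ), hermiteH n (t * x) * t ^ s * exp (-t ^ 2) =
      ∑ m ∈ range (n / 2 + 1),
        hermiteCoeff n x m * (t ^ ((n - 2 * m : ℕ) + s) * exp (-t ^ 2)) := by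
    intro t ht
    simp only [hermiteH_mul_mul_rpow n x s ht, sum_mul, mul_assoc]
  rw [setIntegral_congr_fun measurableSet_Ioi hexpand,
    integral_finsetSum _ fun m _ => (integrableOn_rpow_mul_exp_neg_sq (hq m)).const_mul _]
  simp only [integral_const_mul, integral_rpow_mul_exp_neg_sq (hq _)]

theorem hermite_laplace_gegenbauer (n : ℕ) (l : ℝ) (hl : 0 < l) (x : ℝ) :
    2 / ((n.factorial : ℝ) * Real.Gamma l) *
      ∫ t in Set.Ioi (0 : ℝ),
        hermiteH n (t * x) * t ^ ((n : ℝ) + 2 * l - 1) * Real.exp (-t ^ 2) =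
    gegenbauerC n l x := by
  have hs : -1 < (n : ℝ) + 2 * l - 1 := by linarith [(n.cast_nonneg : (0 : ℝ) ≤ n)]
  rw [integral_hermiteH_mul_rpow_mul_exp_neg_sq n x hs, mul_sum, gegenbauerC]
  refine sum_congr rfl fun m hm => ?_
  have hmn : 2 * m ≤ n := by have := mem_range.mp hm; omega
  have hshift : ((n - 2 * m : ℕ) + ((n : ℝ) + 2 * l - 1) + 1) / 2 = l + (n - m : ℕ) := by
    push_cast [Nat.cast_sub hmn, Nat.cast_sub (by omega : m ≤ n)]
    ring
  rw [hermiteCoeff, hshift,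
    Gamma_add_nat_eq_poch_mul_Gamma fun k => (add_pos_of_pos_of_nonneg hl k.cast_nonneg).ne']
  have hΓ : Gamma l ≠ 0 := (Gamma_pos_of_pos hl).ne'
  field_simp
end

section
/- Let N be a positive integer, m, n integers with 0 ≤ m ≤ N and 0 ≤ n ≤ N, and p, q, z real numbers with p ≠ 0, q ≠ 0, z ≠ 0, p - z + pz ≠ 0, q - z + qz ≠ 0, and 1 + z ≠ 0. Then Σ_{x=0}^N binom(N,x) K_m(x; p, N) K_n(x; q, N) z^x = ((p-z+pz)/p)^m · ((q-z+qz)/q)^n · (1+z)^{N-m-n} · K_m(n; -((p-z+pz)(q-z+qz))/z, N), where (1+z)^{N-m-n} denotes (1+z)^{N-m-n} as a real power of the nonzero real 1+z (an integer exponent, possibly negative). -/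
open MeasureTheory Finset

/-- Krawtchouk polynomial
`K_n(x; p, N) = Σ_{k=0}^n ((-n)_k (-x)_k / ((-N)_k k!)) p^{-k}`. -/
noncomputable def krawtchoukK (n : ℕ) (x : ℝ) (p : ℝ) (N : ℕ) : ℝ :=
  ∑ k ∈ Finset.range (n + 1),
    poch (-(n : ℝ)) k * poch (-x) k / (poch (-(N : ℝ)) k * (k.factorial : ℝ)) *
      p ^ (-(k : ℤ))

/-!
For natural `x`, `K_m(x; p, N) = ∑_j C(m,j) C(x,j) / C(N,j) (-1/p)^j`, so the left side is a
combination of the mixed binomial moments `∑_x C(N,x) C(x,j) C(x,k) z^x`. These equal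
`(1+z)^(N-j-k) ∑_t C(N,j) C(N,k) C(j,t) C(k,t) / C(N,t) z^(j+k-t)`; once `C(N,j) C(N,k)` cancels
against the Krawtchouk coefficients, the `t`-th term splits into a factor in `j` and one in `k`.
Both sums then collapse by `∑_j C(m,j) C(j,t) x^(j-t) y^(m-j) = C(m,t) (x+y)^(m-t)`, leaving the
`t`-th term of `K_m(n; -(p-z+pz)(q-z+qz)/z, N)`.
-/

theorem Nat.sum_range_choose_mul_choose (a b k : ℕ) :
    ∑ i ∈ range (k + 1), a.choose i * b.choose (k - i) = (a + b).choose k := by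
  rw [Nat.add_choose_eq, Finset.Nat.sum_antidiagonal_eq_sum_range_succ_mk]

/-- A `k`-subset of `x` meets a fixed `j`-subset in `k - i` elements and its complement in `i`. -/
theorem Nat.choose_mul_choose_eq_sum (x j k : ℕ) :
    x.choose j * x.choose k =
      ∑ i ∈ range (k + 1), x.choose (j + i) * (j + i).choose j * j.choose (k - i) := by
  rcases le_or_gt j x with hjx | hxj
  · have hterm : ∀ i, x.choose (j + i) * (j + i).choose j * j.choose (k - i) =
        x.choose j * ((x - j).choose i * j.choose (k - i)) := fun i => by
      rw [Nat.choose_mul (Nat.le_add_right j i), Nat.add_sub_cancel_left, mul_assoc]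
    simp only [hterm, ← mul_sum, Nat.sum_range_choose_mul_choose, Nat.sub_add_cancel hjx]
  · have hxji : ∀ i, x < j + i := fun i => hxj.trans_le (Nat.le_add_right j i)
    simp [Nat.choose_eq_zero_of_lt hxj, Nat.choose_eq_zero_of_lt (hxji _)]

theorem Nat.sum_choose_mul_choose_mul_choose_mul_choose (N j k t : ℕ) (hj : j ≤ N) :
    (∑ i ∈ range (k + 1),
        N.choose (j + i) * (j + i).choose j * (j.choose (k - i) * (k - i).choose t)) * N.choose t =
      N.choose j * N.choose k * j.choose t * k.choose t := by
  rcases le_or_gt t k with htk | hkt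
  · have hvanish : ∀ i ∈ range (k + 1), i ∉ range (k - t + 1) →
        N.choose (j + i) * (j + i).choose j * (j.choose (k - i) * (k - i).choose t) = 0 :=
      fun i hik hi => by
        rw [mem_range] at hik hi
        simp [Nat.choose_eq_zero_of_lt (show k - i < t by omega)]
    have hterm : ∀ i ∈ range (k - t + 1),
        N.choose (j + i) * (j + i).choose j * (j.choose (k - i) * (k - i).choose t) =
          N.choose j * j.choose t * ((N - j).choose i * (j - t).choose (k - t - i)) :=
      fun i hi => by
        rw [Nat.choose_mul (Nat.le_add_right j i), Nat.choose_mul (by rw [mem_range] at hi; omega),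
          Nat.add_sub_cancel_left, Nat.sub_right_comm k i t]
        ring
    rw [← sum_subset (range_subset_range.2 (by omega)) hvanish, sum_congr rfl hterm, ← mul_sum,
      Nat.sum_range_choose_mul_choose]
    rcases le_or_gt t j with htj | hjt
    · rw [show N - j + (j - t) = N - t by omega, mul_assoc _ _ (N.choose t),
        mul_comm _ (N.choose t), ← Nat.choose_mul htk]
      ring
    · simp [Nat.choose_eq_zero_of_lt hjt]
  · have hvanish : ∀ i ∈ range (k + 1),
        N.choose (j + i) * (j + i).choose j * (j.choose (k - i) * (k - i).choose t) = 0 :=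
      fun i _ => by simp [Nat.choose_eq_zero_of_lt (show k - i < t by omega)]
    simp [sum_eq_zero hvanish, Nat.choose_eq_zero_of_lt hkt]

section CommSemiring

variable {R : Type*} [CommSemiring R]

theorem sum_choose_mul_choose_mul_pow_mul_pow (m t : ℕ) (x y : R) :
    ∑ j ∈ range (m + 1), (m.choose j * j.choose t : R) * x ^ (j - t) * y ^ (m - j) =
      m.choose t * (x + y) ^ (m - t) := by
  rcases le_or_gt t m with htm | hmt
  · obtain ⟨n, rfl⟩ := Nat.exists_eq_add_of_le htm
    have hlow : ∀ j ∈ range t, ((t + n).choose j * j.choose t : R) * x ^ (j - t) *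
        y ^ (t + n - j) = 0 := fun j hj => by
      simp [Nat.choose_eq_zero_of_lt (mem_range.1 hj)]
    rw [add_assoc, sum_range_add, sum_eq_zero hlow, zero_add, Nat.add_sub_cancel_left, add_pow,
      mul_sum]
    refine sum_congr rfl fun u _ => ?_
    rw [← Nat.cast_mul, Nat.choose_mul (Nat.le_add_right t u), Nat.add_sub_cancel_left,
      Nat.add_sub_cancel_left, Nat.sub_add_eq, Nat.add_sub_cancel_left]
    push_cast
    ring
  · have hzero : ∀ j ∈ range (m + 1), (m.choose j * j.choose t : R) * x ^ (j - t) *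
        y ^ (m - j) = 0 := fun j hj => by
      simp [Nat.choose_eq_zero_of_lt ((Nat.lt_succ_iff.1 (mem_range.1 hj)).trans_lt hmt)]
    simp [sum_eq_zero hzero, Nat.choose_eq_zero_of_lt hmt]

theorem pow_mul_one_add_pow (a n : ℕ) (z : R) :
    z ^ a * (1 + z) ^ n = ∑ t ∈ range (n + 1), (n.choose t : R) * z ^ (a + n - t) := by
  rw [add_pow, mul_sum]
  refine sum_congr rfl fun t ht => ?_
  rw [one_pow, one_mul, Nat.add_sub_assoc (Nat.lt_succ_iff.1 (mem_range.1 ht)), pow_add]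
  ring

theorem sum_choose_mul_choose_mul_pow (N s : ℕ) (z : R) :
    ∑ x ∈ range (N + 1), (N.choose x * x.choose s : R) * z ^ x =
      N.choose s * z ^ s * (1 + z) ^ (N - s) := by
  have h := sum_choose_mul_choose_mul_pow_mul_pow N s z 1
  simp only [one_pow, mul_one, add_comm z] at h
  rw [mul_right_comm, ← h, sum_mul]
  refine sum_congr rfl fun x _ => ?_
  rcases le_or_gt s x with hsx | hxs
  · rw [← Nat.add_sub_cancel' hsx, pow_add, Nat.add_sub_cancel_left]
    ring
  · simp [Nat.choose_eq_zero_of_lt hxs]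

end CommSemiring

section Field

variable {K : Type*} [Field K]

theorem pow_mul_one_add_pow_eq_sum_mul_zpow {s r N : ℕ} (hsr : s ≤ r) (hsN : s ≤ N)
    (hrN : r - s ≤ N) {z : K} (hz : 1 + z ≠ 0) :
    z ^ s * (1 + z) ^ (N - s) =
      (∑ t ∈ range (N + 1), ((r - s).choose t : K) * z ^ (r - t)) *
        (1 + z) ^ ((N : ℤ) - r) := by
  have hpow : (1 + z) ^ (N - s) = (1 + z) ^ (r - s) * (1 + z) ^ ((N : ℤ) - r) := by
    rw [← zpow_natCast, ← zpow_natCast, ← zpow_add₀ hz]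
    congr 1
    omega
  rw [hpow, ← mul_assoc, pow_mul_one_add_pow, Nat.add_sub_cancel' hsr,
    ← eventually_constant_sum (fun t ht => by simp [Nat.choose_eq_zero_of_lt ht])
      (by omega : r - s + 1 ≤ N + 1)]

theorem pow_mul_pow_sub_mul_pow_sub {A B : K} (hA : A ≠ 0) (hB : B ≠ 0) (c : K) {m n t : ℕ}
    (htm : t ≤ m) (htn : t ≤ n) :
    c ^ t * A ^ (m - t) * B ^ (n - t) = A ^ m * B ^ n * (c / (A * B)) ^ t := by
  rw [pow_sub₀ _ hA htm, pow_sub₀ _ hB htn, div_pow, mul_pow]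
  field_simp

theorem sum_choose_mul_choose_mul_choose_mul_pow [CharZero K] (N j k : ℕ) (hj : j ≤ N)
    (hk : k ≤ N) {z : K} (hz : 1 + z ≠ 0) :
    ∑ x ∈ range (N + 1), (N.choose x : K) * x.choose j * x.choose k * z ^ x =
      (∑ t ∈ range (N + 1),
        (N.choose j * N.choose k * j.choose t * k.choose t / N.choose t : K) * z ^ (j + k - t)) *
        (1 + z) ^ ((N : ℤ) - j - k) := by
  have hsplit : ∀ x ∈ range (N + 1), (N.choose x : K) * x.choose j * x.choose k * z ^ x =
      ∑ i ∈ range (k + 1), ((j + i).choose j * j.choose (k - i) : K) *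
        ((N.choose x * x.choose (j + i) : K) * z ^ x) := fun x _ => by
    rw [mul_assoc (N.choose x : K), ← Nat.cast_mul, Nat.choose_mul_choose_eq_sum, Nat.cast_sum,
      mul_sum, sum_mul]
    refine sum_congr rfl fun i _ => ?_
    push_cast
    ring
  have hexpand : ∀ i ∈ range (k + 1),
      ((j + i).choose j * j.choose (k - i) : K) *
          (N.choose (j + i) * z ^ (j + i) * (1 + z) ^ (N - (j + i))) =
        (∑ t ∈ range (N + 1),
          ((N.choose (j + i) * (j + i).choose j * (j.choose (k - i) * (k - i).choose t) : ℕ) : K)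
            * z ^ (j + k - t)) * (1 + z) ^ ((N : ℤ) - j - k) := fun i hi => by
    rw [mem_range] at hi
    rcases le_or_gt (j + i) N with hjiN | hNji
    · rw [mul_assoc _ (z ^ _), pow_mul_one_add_pow_eq_sum_mul_zpow (r := j + k) (by omega) hjiN
        (by omega) hz, show j + k - (j + i) = k - i by omega, Nat.cast_add, ← sub_sub]
      simp only [mul_sum, sum_mul]
      refine sum_congr rfl fun t _ => ?_
      push_cast
      ring
    · simp [Nat.choose_eq_zero_of_lt hNji]
  rw [sum_congr rfl hsplit, sum_comm]
  simp_rw [← mul_sum, sum_choose_mul_choose_mul_pow]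
  rw [sum_congr rfl hexpand, ← sum_mul, sum_comm]
  congr 1
  refine sum_congr rfl fun t ht => ?_
  have hNt : (N.choose t : K) ≠ 0 := by
    exact_mod_cast (Nat.choose_pos (Nat.lt_succ_iff.1 (mem_range.1 ht))).ne'
  rw [← sum_mul, ← Nat.cast_sum]
  congr 1
  rw [eq_div_iff hNt]
  exact_mod_cast Nat.sum_choose_mul_choose_mul_choose_mul_choose N j k t hj

theorem choose_div_mul_choose_div_mul_moment_term [CharZero K] {N m n j k : ℕ} (hm : m ≤ N)
    (hn : n ≤ N) (hj : j ≤ m) (hk : k ≤ n) (t : ℕ) (a b : K) {z : K} (hz : 1 + z ≠ 0) :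
    n.choose k * b ^ k / N.choose k * (m.choose j * a ^ j / N.choose j) *
        ((N.choose j * N.choose k * j.choose t * k.choose t / N.choose t : K) *
          z ^ (j + k - t) * (1 + z) ^ ((N : ℤ) - j - k)) =
      (m.choose j * j.choose t : K) * (a * z) ^ (j - t) * (1 + z) ^ (m - j) *
        ((n.choose k * k.choose t : K) * (b * z) ^ (k - t) * (1 + z) ^ (n - k)) *
        ((a * b * z) ^ t / N.choose t * (1 + z) ^ ((N : ℤ) - m - n)) := by
  rcases lt_or_ge j t with hjt | htj
  · simp [Nat.choose_eq_zero_of_lt hjt]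
  rcases lt_or_ge k t with hkt | htk
  · simp [Nat.choose_eq_zero_of_lt hkt]
  have hNj : (N.choose j : K) ≠ 0 := by exact_mod_cast (Nat.choose_pos (hj.trans hm)).ne'
  have hNk : (N.choose k : K) ≠ 0 := by exact_mod_cast (Nat.choose_pos (hk.trans hn)).ne'
  have hpow : (1 + z) ^ ((N : ℤ) - j - k) =
      (1 + z) ^ (m - j) * (1 + z) ^ (n - k) * (1 + z) ^ ((N : ℤ) - m - n) := by
    rw [← zpow_natCast, ← zpow_natCast, ← zpow_add₀ hz, ← zpow_add₀ hz]
    congr 1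
    omega
  obtain ⟨u, rfl⟩ := Nat.exists_eq_add_of_le htj
  obtain ⟨v, rfl⟩ := Nat.exists_eq_add_of_le htk
  rw [hpow, show t + u + (t + v) - t = t + u + v by omega, Nat.add_sub_cancel_left,
    Nat.add_sub_cancel_left]
  field_simp
  ring

theorem sum_choose_mul_sum_mul_sum_mul_pow [CharZero K] (N m n : ℕ) (hm : m ≤ N) (hn : n ≤ N)
    (a b : K) {z : K} (hz : 1 + z ≠ 0) :
    ∑ x ∈ range (N + 1), (N.choose x : K) *
        (∑ j ∈ range (m + 1), m.choose j * (x.choose j / N.choose j : K) * a ^ j) *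
        (∑ k ∈ range (n + 1), n.choose k * (x.choose k / N.choose k : K) * b ^ k) * z ^ x =
      (∑ t ∈ range (N + 1), (m.choose t * n.choose t / N.choose t : K) * (a * b * z) ^ t *
        (a * z + (1 + z)) ^ (m - t) * (b * z + (1 + z)) ^ (n - t)) *
        (1 + z) ^ ((N : ℤ) - m - n) := by
  calc _ = ∑ k ∈ range (n + 1), ∑ j ∈ range (m + 1),
        n.choose k * b ^ k / N.choose k * (m.choose j * a ^ j / N.choose j) *
          ∑ x ∈ range (N + 1), (N.choose x : K) * x.choose j * x.choose k * z ^ x := by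
        simp only [mul_sum, sum_mul]
        rw [sum_comm]
        exact sum_congr rfl fun k _ =>
          sum_comm.trans (sum_congr rfl fun j _ => sum_congr rfl fun x _ => by ring)
    _ = ∑ t ∈ range (N + 1), ∑ k ∈ range (n + 1), ∑ j ∈ range (m + 1),
        (m.choose j * j.choose t : K) * (a * z) ^ (j - t) * (1 + z) ^ (m - j) *
          ((n.choose k * k.choose t : K) * (b * z) ^ (k - t) * (1 + z) ^ (n - k)) *
          ((a * b * z) ^ t / N.choose t * (1 + z) ^ ((N : ℤ) - m - n)) := by
        rw [sum_comm (s := range (N + 1))]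
        refine sum_congr rfl fun k hk => ?_
        rw [sum_comm (s := range (N + 1))]
        refine sum_congr rfl fun j hj => ?_
        rw [mem_range, Nat.lt_succ_iff] at hj hk
        rw [sum_choose_mul_choose_mul_choose_mul_pow N j k (hj.trans hm) (hk.trans hn) hz,
          sum_mul, mul_sum]
        exact sum_congr rfl fun t _ =>
          choose_div_mul_choose_div_mul_moment_term hm hn hj hk t a b hz
    _ = _ := by
        rw [sum_mul]
        refine sum_congr rfl fun t _ => ?_
        rw [sum_comm]
        simp only [← sum_mul]
        rw [← sum_mul_sum, sum_choose_mul_choose_mul_pow_mul_pow,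
          sum_choose_mul_choose_mul_pow_mul_pow]
        ring

end Field

theorem poch_neg_natCast (x k : ℕ) :
    poch (-(x : ℝ)) k = (-1) ^ k * k.factorial * x.choose k := by
  have h : ∀ i ∈ range k, -(x : ℝ) + i = -1 * ((x : ℝ) - i) := fun _ _ => by ring
  rw [poch, prod_congr rfl h, prod_mul_distrib, prod_const, card_range,
    ← descPochhammer_eval_eq_prod_range, descPochhammer_eval_eq_descFactorial,
    Nat.descFactorial_eq_factorial_mul_choose, Nat.cast_mul, mul_assoc]

theorem krawtchoukK_natCast (m N x : ℕ) (p : ℝ) :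
    krawtchoukK m x p N =
      ∑ j ∈ range (m + 1), m.choose j * (x.choose j / N.choose j : ℝ) * (-p⁻¹) ^ j := by
  refine sum_congr rfl fun j _ => ?_
  rw [poch_neg_natCast, poch_neg_natCast, poch_neg_natCast, zpow_neg, zpow_natCast, ← inv_pow,
    neg_pow p⁻¹]
  field_simp

theorem krawtchouk_generating_general (N : ℕ) (m n : ℕ) (hm : m ≤ N) (hn : n ≤ N)
    (p q z : ℝ) (hp : p ≠ 0) (hq : q ≠ 0)
    (hpz : p - z + p * z ≠ 0) (hqz : q - z + q * z ≠ 0) (h1z : 1 + z ≠ 0) :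
    ∑ x ∈ Finset.range (N + 1),
        (N.choose x : ℝ) * krawtchoukK m (x : ℝ) p N * krawtchoukK n (x : ℝ) q N * z ^ x =
      ((p - z + p * z) / p) ^ m * ((q - z + q * z) / q) ^ n *
        (1 + z) ^ ((N : ℤ) - (m : ℤ) - (n : ℤ)) *
        krawtchoukK m (n : ℝ) (-((p - z + p * z) * (q - z + q * z)) / z) N := by
  have hA : -p⁻¹ * z + (1 + z) = (p - z + p * z) / p := by field_simp; ring
  have hB : -q⁻¹ * z + (1 + z) = (q - z + q * z) / q := by field_simp; ring
  have hP : -(-((p - z + p * z) * (q - z + q * z)) / z)⁻¹ =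
      -p⁻¹ * -q⁻¹ * z / ((p - z + p * z) / p * ((q - z + q * z) / q)) := by
    rw [inv_div, div_neg, neg_neg]
    field_simp
  simp only [krawtchoukK_natCast]
  rw [sum_choose_mul_sum_mul_sum_mul_pow N m n hm hn _ _ h1z, hA, hB, hP, mul_sum, sum_mul,
    ← eventually_constant_sum (fun t ht => by simp [Nat.choose_eq_zero_of_lt ht])
      (by omega : m + 1 ≤ N + 1)]
  refine sum_congr rfl fun t _ => ?_
  rcases lt_or_ge n t with hnt | htn
  · simp [Nat.choose_eq_zero_of_lt hnt]
  rcases lt_or_ge m t with hmt | htm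
  · simp [Nat.choose_eq_zero_of_lt hmt]
  linear_combination (m.choose t * n.choose t / N.choose t * (1 + z) ^ ((N : ℤ) - m - n) : ℝ) *
    pow_mul_pow_sub_mul_pow_sub (div_ne_zero hpz hp) (div_ne_zero hqz hq) (-p⁻¹ * -q⁻¹ * z)
      htm htn

theorem krawtchouk_generating (N : ℕ) (hN : 0 < N) (m n : ℕ) (hm : m ≤ N) (hn : n ≤ N)
    (p q z : ℝ) (hp : p ≠ 0) (hq : q ≠ 0) (hz : z ≠ 0)
    (hpz : p - z + p * z ≠ 0) (hqz : q - z + q * z ≠ 0) (h1z : 1 + z ≠ 0) :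
    ∑ x ∈ Finset.range (N + 1),
        (N.choose x : ℝ) * krawtchoukK m (x : ℝ) p N * krawtchoukK n (x : ℝ) q N * z ^ x =
      ((p - z + p * z) / p) ^ m * ((q - z + q * z) / q) ^ n *
        (1 + z) ^ ((N : ℤ) - (m : ℤ) - (n : ℤ)) *
        krawtchoukK m (n : ℝ) (-((p - z + p * z) * (q - z + q * z)) / z) N :=
  krawtchouk_generating_general N m n hm hn p q z hp hq hpz hqz h1z
end
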